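/- arXiv:2012.04415 — 2 statements merged into one kernel-verified Lean document; each statement's English description precedes it below -/
import Mathlib

section
/- Let V be a finite-dimensional vector space with nondegenerate symmetric bilinear form Q, W a finite-dimensional vector space, θ : W → V a linear map, and ψ : V → W* the map ψ(v)(w) = Q(θ(w), v). If the sequence W → V → W* is exact at V (i.e., range θ = ker ψ), then range θ is a maximal isotropic subspace of V with respect to Q. -/
open LinearMap (BilinForm)

namespace LinearMap.BilinForm

variable {R M N : Type*} [CommRing R] [AddCommGroup M] [Module R M] [AddCommGroup N] [Module R N]

theorem ker_dualMap_comp_flip_eq_orthogonal_range (B : BilinForm R M) (f : N →ₗ[R] M) :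
    LinearMap.ker (f.dualMap ∘ₗ B.flip) = B.orthogonal (LinearMap.range f) := by
  ext v
  simp only [LinearMap.mem_ker, mem_orthogonal_iff, LinearMap.mem_range, forall_exists_index,
    forall_apply_eq_imp_iff, LinearMap.ext_iff]
  rfl

theorem isotropic_of_eq_orthogonal {B : BilinForm R M} {S : Submodule R M}
    (hS : S = B.orthogonal S) : ∀ x ∈ S, ∀ y ∈ S, B x y = 0 := fun x hx y hy =>
  (mem_orthogonal_iff.mp (hS ▸ hy : y ∈ B.orthogonal S)) x hx

theorem eq_of_eq_orthogonal_of_le_of_isotropic {B : BilinForm R M} {S U : Submodule R M}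
    (hS : S = B.orthogonal S) (hle : S ≤ U) (hU : ∀ x ∈ U, ∀ y ∈ U, B x y = 0) : U = S :=
  le_antisymm (fun u hu => hS ▸ mem_orthogonal_iff.mpr fun x hx => hU x (hle hx) u hu) hle

end LinearMap.BilinForm

theorem stmt3_general {K V W : Type*} [Field K]
    [AddCommGroup V] [Module K V]
    [AddCommGroup W] [Module K W]
    (Q : LinearMap.BilinForm K V)
    (θ : W →ₗ[K] V)
    (hexact : LinearMap.range θ = LinearMap.ker (θ.dualMap ∘ₗ Q.flip)) :
    (∀ x ∈ LinearMap.range θ, ∀ y ∈ LinearMap.range θ, Q x y = 0) ∧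
      (∀ U' : Submodule K V, LinearMap.range θ ≤ U' →
        (∀ x ∈ U', ∀ y ∈ U', Q x y = 0) → U' = LinearMap.range θ) := by
  rw [Q.ker_dualMap_comp_flip_eq_orthogonal_range θ] at hexact
  exact ⟨Q.isotropic_of_eq_orthogonal hexact,
    fun _ => Q.eq_of_eq_orthogonal_of_le_of_isotropic hexact⟩

/-- If `W →θ V →ψ W*` with `ψ v = (w ↦ Q(θ w, v))` is exact at `V`, then `range θ` is a
maximal isotropic subspace of `V` with respect to `Q`. -/
theorem stmt3 {K V W : Type*} [Field K]
    [AddCommGroup V] [Module K V] [FiniteDimensional K V]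
    [AddCommGroup W] [Module K W] [FiniteDimensional K W]
    (Q : LinearMap.BilinForm K V) (hQ : Q.Nondegenerate)
    (hsymm : ∀ x y, Q x y = Q y x)
    (θ : W →ₗ[K] V)
    (hexact : LinearMap.range θ = LinearMap.ker (θ.dualMap ∘ₗ Q.flip)) :
    (∀ x ∈ LinearMap.range θ, ∀ y ∈ LinearMap.range θ, Q x y = 0) ∧
      (∀ U' : Submodule K V, LinearMap.range θ ≤ U' →
        (∀ x ∈ U', ∀ y ∈ U', Q x y = 0) → U' = LinearMap.range θ) :=
  stmt3_general Q θ hexact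
end

section
/- Consider an exact sequence of finite-dimensional vector spaces 0 → A₁ → B₁ → C₀ → A₂ →θ B₂ →ψ C₁ → A₃ → B₃ → C₂ → 0 in which there are isomorphisms Aᵢ ≅ C_{3-i}* for i = 1, 2, 3 and B₂ carries a nondegenerate symmetric bilinear form identifying B₂ ≅ B₂* compatibly, such that range θ = ker ψ and ψ is the composite of B₂ ≅ B₂* with θ* : B₂* → A₂* ≅ C₁. Then dim B₂ is even and dim B₂ = 2·dim(range θ). -/
/-!
Since `ψ` is, up to the isomorphisms `A₂ ≅ C₁*` and `B₂ ≅ B₂*`, the transpose of `θ`, the two maps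
have the same rank `r`. Exactness at `B₂` gives `ker ψ = range θ`, so rank–nullity for `ψ` reads
`dim B₂ = r + r`.
-/

open Module LinearMap

namespace LinearMap

variable {K U V W : Type*} [Field K]
  [AddCommGroup U] [Module K U] [AddCommGroup V] [Module K V]
  [AddCommGroup W] [Module K W]

theorem finrank_range_comp_of_injective {g : V →ₗ[K] W} (hg : Function.Injective g)
    (f : U →ₗ[K] V) : finrank K (range (g ∘ₗ f)) = finrank K (range f) := by
  rw [range_comp]
  exact (Submodule.equivMapOfInjective g hg _).finrank_eq.symm

theorem finrank_range_comp_of_surjective (g : V →ₗ[K] W) {f : U →ₗ[K] V}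
    (hf : Function.Surjective f) : finrank K (range (g ∘ₗ f)) = finrank K (range g) := by
  rw [range_comp_of_range_eq_top g (range_eq_top.mpr hf)]

theorem finrank_range_eq_of_dualMap_comp_eq (θ : U →ₗ[K] V) (ψ : V →ₗ[K] W)
    (e : U ≃ₗ[K] Dual K W) {j : V →ₗ[K] Dual K V} (hj : Function.Injective j)
    (h : ψ.dualMap ∘ₗ e.toLinearMap = j ∘ₗ θ) :
    finrank K (range ψ) = finrank K (range θ) := by
  rw [← finrank_range_dualMap_eq_finrank_range, ← finrank_range_comp_of_surjective _ e.surjective,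
    h, finrank_range_comp_of_injective hj]

end LinearMap

theorem stmt14_general {K A₂ B₂ C₁ : Type*} [Field K]
    [AddCommGroup A₂] [Module K A₂]
    [AddCommGroup B₂] [Module K B₂] [FiniteDimensional K B₂]
    [AddCommGroup C₁] [Module K C₁]
    (θ : A₂ →ₗ[K] B₂) (ψ : B₂ →ₗ[K] C₁)
    -- exactness of the ten-term sequence
    (hex₄ : LinearMap.range θ = LinearMap.ker ψ)
    -- dualities `Aᵢ ≅ C₍₃₋ᵢ₎*`
    (e₂ : A₂ ≃ₗ[K] Module.Dual K C₁)
    -- nondegenerate symmetric bilinear form on `B₂` compatible with `ψ` being `θ*`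
    (Q : LinearMap.BilinForm K B₂) (hQ : Q.Nondegenerate)
    (hψ : ∀ (b : B₂) (a : A₂), e₂ a (ψ b) = Q (θ a) b) :
    Even (Module.finrank K B₂) ∧
      Module.finrank K B₂ = 2 * Module.finrank K (LinearMap.range θ) := by
  have hrank : finrank K (range ψ) = finrank K (range θ) :=
    finrank_range_eq_of_dualMap_comp_eq θ ψ e₂ (ker_eq_bot.mp hQ.ker_eq_bot)
      (by ext a b; exact hψ b a)
  have hrank_nullity := ψ.finrank_range_add_finrank_ker
  rw [← hex₄, hrank] at hrank_nullity
  exact ⟨⟨_, hrank_nullity.symm⟩, by omega⟩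

/-- For a self-dual exact sequence
`0 → A₁ → B₁ → C₀ → A₂ →θ B₂ →ψ C₁ → A₃ → B₃ → C₂ → 0`
with `Aᵢ ≅ C₍₃₋ᵢ₎*` and `B₂` carrying a nondegenerate symmetric bilinear form `Q`
identifying `ψ` with the dual of `θ`, the dimension of `B₂` is even and equals
`2 · dim (range θ)`. -/
theorem stmt14 {K A₁ B₁ C₀ A₂ B₂ C₁ A₃ B₃ C₂ : Type*} [Field K]
    [AddCommGroup A₁] [Module K A₁] [FiniteDimensional K A₁]
    [AddCommGroup B₁] [Module K B₁] [FiniteDimensional K B₁]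
    [AddCommGroup C₀] [Module K C₀] [FiniteDimensional K C₀]
    [AddCommGroup A₂] [Module K A₂] [FiniteDimensional K A₂]
    [AddCommGroup B₂] [Module K B₂] [FiniteDimensional K B₂]
    [AddCommGroup C₁] [Module K C₁] [FiniteDimensional K C₁]
    [AddCommGroup A₃] [Module K A₃] [FiniteDimensional K A₃]
    [AddCommGroup B₃] [Module K B₃] [FiniteDimensional K B₃]
    [AddCommGroup C₂] [Module K C₂] [FiniteDimensional K C₂]
    (f₁ : A₁ →ₗ[K] B₁) (f₂ : B₁ →ₗ[K] C₀) (f₃ : C₀ →ₗ[K] A₂)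
    (θ : A₂ →ₗ[K] B₂) (ψ : B₂ →ₗ[K] C₁)
    (f₆ : C₁ →ₗ[K] A₃) (f₇ : A₃ →ₗ[K] B₃) (f₈ : B₃ →ₗ[K] C₂)
    -- exactness of the ten-term sequence
    (hinj : Function.Injective f₁)
    (hex₁ : LinearMap.range f₁ = LinearMap.ker f₂)
    (hex₂ : LinearMap.range f₂ = LinearMap.ker f₃)
    (hex₃ : LinearMap.range f₃ = LinearMap.ker θ)
    (hex₄ : LinearMap.range θ = LinearMap.ker ψ)
    (hex₅ : LinearMap.range ψ = LinearMap.ker f₆)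
    (hex₆ : LinearMap.range f₆ = LinearMap.ker f₇)
    (hex₇ : LinearMap.range f₇ = LinearMap.ker f₈)
    (hsurj : Function.Surjective f₈)
    -- dualities `Aᵢ ≅ C₍₃₋ᵢ₎*`
    (e₁ : A₁ ≃ₗ[K] Module.Dual K C₂)
    (e₂ : A₂ ≃ₗ[K] Module.Dual K C₁)
    (e₃ : A₃ ≃ₗ[K] Module.Dual K C₀)
    -- nondegenerate symmetric bilinear form on `B₂` compatible with `ψ` being `θ*`
    (Q : LinearMap.BilinForm K B₂) (hQ : Q.Nondegenerate)
    (hsymm : ∀ x y, Q x y = Q y x)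
    (hψ : ∀ (b : B₂) (a : A₂), e₂ a (ψ b) = Q (θ a) b) :
    Even (Module.finrank K B₂) ∧
      Module.finrank K B₂ = 2 * Module.finrank K (LinearMap.range θ) :=
  stmt14_general θ ψ hex₄ e₂ Q hQ hψ
end
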